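/- arXiv:cs/0608066 — 2 statements merged into one kernel-verified Lean document; each statement's English description precedes it below -/
import Mathlib

section
/- Let k be a positive integer and let H_m be the final subgraph produced by the online certificate process on G. Then H_m is k-connected if and only if G is k-connected. -/
/-!
An input edge `uv` of `G` is either kept by the process, or rejected because the certificate
built so far already contains `k` internally disjoint `u`–`v` paths; as the certificate only
grows, the final graph `H_m` has the edge or these paths. A set `S` of fewer than `k` vertices avoiding
`u` and `v` misses one of the paths, so every edge of `G - S` joins vertices that are connected in
`H_m - S`, and `H_m - S` inherits the connectivity of `G - S`. Conversely `H_m ≤ G`.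
-/

/-- A graph `H` on at least `k+1` vertices is `k`-connected if deleting any set of at most
`k-1` vertices leaves a connected graph. -/
def IsKConnected {V : Type*} [Fintype V] (k : ℕ) (H : SimpleGraph V) : Prop :=
  k + 1 ≤ Fintype.card V ∧
    ∀ S : Finset V, S.card ≤ k - 1 → (H.induce ((↑S : Set V)ᶜ)).Connected

/-- `H` contains `k` pairwise internally vertex-disjoint paths between `u` and `v`. -/
def InternallyDisjointPaths {V : Type*} (H : SimpleGraph V) (k : ℕ) (u v : V) : Prop :=
  ∃ p : Fin k → H.Walk u v, (∀ i, (p i).IsPath) ∧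
    ∀ i j, i ≠ j → ∀ x, x ∈ (p i).support → x ∈ (p j).support → x = u ∨ x = v

-- The online certificate process: starting from the empty graph `H_0 = ⊥`, the `i`-th input
-- edge `(e i).1 (e i).2` is added iff the current subgraph does not already contain `k`
-- pairwise internally vertex-disjoint paths between its endpoints.
open Classical in
noncomputable def certProcess {V : Type*} (k : ℕ) (e : ℕ → V × V) : ℕ → SimpleGraph V
  | 0 => ⊥
  | (i + 1) =>
      if InternallyDisjointPaths (certProcess k e i) k (e i).1 (e i).2 then
        certProcess k e i
      else
        certProcess k e i ⊔ SimpleGraph.fromEdgeSet {s((e i).1, (e i).2)}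

open Finset SimpleGraph

lemma SimpleGraph.Connected.of_adj_reachable {W : Type*} {G H : SimpleGraph W}
    (hG : G.Connected) (h : ∀ ⦃a b⦄, G.Adj a b → H.Reachable a b) : H.Connected := by
  refine (connected_iff H).2 ⟨fun a b => ?_, hG.nonempty⟩
  simp only [reachable_iff_reflTransGen] at h ⊢
  exact Relation.reflTransGen_closed h a b ((reachable_iff_reflTransGen a b).1 (hG a b))

namespace InternallyDisjointPaths

variable {V : Type*} {H H' : SimpleGraph V} {k : ℕ} {u v : V}

lemma mono (hle : H ≤ H') (h : InternallyDisjointPaths H k u v) :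
    InternallyDisjointPaths H' k u v := by
  obtain ⟨p, hpath, hdisj⟩ := h
  refine ⟨fun i => (p i).mapLe hle, fun i => (hpath i).mapLe hle, ?_⟩
  simpa only [Walk.support_mapLe_eq_support] using hdisj

lemma exists_walk_avoiding (h : InternallyDisjointPaths H k u v) {S : Finset V} (hS : #S < k)
    (hu : u ∉ S) (hv : v ∉ S) : ∃ w : H.Walk u v, ∀ x ∈ w.support, x ∉ S := by
  obtain ⟨p, -, hdisj⟩ := h
  by_contra! hhit
  choose f hf_support hf_mem using fun i => hhit (p i)
  -- distinct paths share only `u` and `v`, which lie outside `S`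
  have hf_inj : Function.Injective f := by
    intro i j hij
    by_contra hne
    rcases hdisj i j hne (f i) (hf_support i) (hij ▸ hf_support j) with hfu | hfv
    · exact hu (hfu ▸ hf_mem i)
    · exact hv (hfv ▸ hf_mem i)
  have hcard := card_le_card_of_injOn (s := univ) f (fun i _ => hf_mem i) hf_inj.injOn
  simp only [card_univ, Fintype.card_fin] at hcard
  omega

lemma reachable_induce_compl (h : InternallyDisjointPaths H k u v) {S : Finset V} (hS : #S < k)
    (hu : u ∈ (↑S : Set V)ᶜ) (hv : v ∈ (↑S : Set V)ᶜ) :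
    (H.induce (↑S : Set V)ᶜ).Reachable ⟨u, hu⟩ ⟨v, hv⟩ := by
  obtain ⟨w, hw⟩ := h.exists_walk_avoiding hS hu hv
  exact ⟨w.induce _ hw⟩

end InternallyDisjointPaths

section certProcess

variable {V : Type*} (k : ℕ) (e : ℕ → V × V)

lemma certProcess_monotone : Monotone (certProcess k e) :=
  monotone_nat_of_le_succ fun i => by
    rw [certProcess]
    split_ifs
    · exact le_rfl
    · exact le_sup_left

lemma certProcess_le {G : SimpleGraph V} {m : ℕ} (hadj : ∀ i < m, G.Adj (e i).1 (e i).2) :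
    certProcess k e m ≤ G := by
  induction m with
  | zero => exact bot_le
  | succ n ih =>
    have hle : certProcess k e n ≤ G := ih fun i hi => hadj i (by omega)
    rw [certProcess]
    split_ifs
    · exact hle
    · refine sup_le hle ((fromEdgeSet_le G).2 (Set.sdiff_subset.trans ?_))
      exact Set.singleton_subset_iff.2 (hadj n n.lt_succ_self)

lemma certProcess_succ_adj_or_internallyDisjointPaths (i : ℕ) (hne : (e i).1 ≠ (e i).2) :
    (certProcess k e (i + 1)).Adj (e i).1 (e i).2 ∨
      InternallyDisjointPaths (certProcess k e i) k (e i).1 (e i).2 := by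
  by_cases hpaths : InternallyDisjointPaths (certProcess k e i) k (e i).1 (e i).2
  · exact Or.inr hpaths
  · left
    rw [certProcess, if_neg hpaths]
    simp [hne]

lemma certProcess_adj_or_internallyDisjointPaths {i m : ℕ} (hi : i < m)
    (hne : (e i).1 ≠ (e i).2) :
    (certProcess k e m).Adj (e i).1 (e i).2 ∨
      InternallyDisjointPaths (certProcess k e m) k (e i).1 (e i).2 :=
  (certProcess_succ_adj_or_internallyDisjointPaths k e i hne).imp
    (fun hadj => certProcess_monotone k e hi hadj)
    (fun hpaths => hpaths.mono (certProcess_monotone k e hi.le))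

lemma certProcess_reachable_induce_compl {i m : ℕ} (hi : i < m) (hne : (e i).1 ≠ (e i).2)
    {S : Finset V} (hS : #S < k) (h₁ : (e i).1 ∈ (↑S : Set V)ᶜ)
    (h₂ : (e i).2 ∈ (↑S : Set V)ᶜ) :
    ((certProcess k e m).induce (↑S : Set V)ᶜ).Reachable ⟨_, h₁⟩ ⟨_, h₂⟩ := by
  rcases certProcess_adj_or_internallyDisjointPaths k e hi hne with hadj | hpaths
  · exact Adj.reachable hadj
  · exact hpaths.reachable_induce_compl hS h₁ h₂

end certProcess

theorem certProcess_kConnected_iff_general {V : Type*} [Fintype V] (G : SimpleGraph V)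
    (k m : ℕ) (hk : 0 < k)
    (e : ℕ → V × V)
    (hadj : ∀ i < m, G.Adj (e i).1 (e i).2)
    (hcov : ∀ a b, G.Adj a b → ∃ i < m, s((e i).1, (e i).2) = s(a, b)) :
    IsKConnected k (certProcess k e m) ↔ IsKConnected k G := by
  have hle : certProcess k e m ≤ G := certProcess_le k e hadj
  refine ⟨fun ⟨hcard, hconn⟩ => ⟨hcard, fun S hS => (hconn S hS).mono fun _ _ h => hle h⟩,
    fun ⟨hcard, hconn⟩ => ⟨hcard, fun S hS => ?_⟩⟩
  have hS' : #S < k := by omega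
  refine (hconn S hS).of_adj_reachable ?_
  rintro ⟨a, ha⟩ ⟨b, hb⟩ hab
  obtain ⟨i, hi, hei⟩ := hcov a b hab
  have hne : (e i).1 ≠ (e i).2 := (hadj i hi).ne
  rcases Sym2.eq_iff.1 hei with ⟨rfl, rfl⟩ | ⟨rfl, rfl⟩
  · exact certProcess_reachable_induce_compl k e hi hne hS' ha hb
  · exact (certProcess_reachable_induce_compl k e hi hne hS' hb ha).symm

/-- The final subgraph `H_m` produced by the online certificate process on `G` is
`k`-connected if and only if `G` is `k`-connected. -/
theorem certProcess_kConnected_iff {V : Type*} [Fintype V] (G : SimpleGraph V)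
    (k m : ℕ) (hk : 0 < k)
    (e : ℕ → V × V)
    (hadj : ∀ i < m, G.Adj (e i).1 (e i).2)
    (hinj : ∀ i < m, ∀ j < m, s((e i).1, (e i).2) = s((e j).1, (e j).2) → i = j)
    (hcov : ∀ a b, G.Adj a b → ∃ i < m, s((e i).1, (e i).2) = s(a, b)) :
    IsKConnected k (certProcess k e m) ↔ IsKConnected k G :=
  certProcess_kConnected_iff_general G k m hk e hadj hcov
end

section
/- With G_0 = G and, for i = 1, …, k, o_i a scan order of G_{i−1} and F_i the earliest-neighbor forest of G_{i−1} with respect to o_i, for every positive integer l < k a set S ⊆ V is an l-separator of the graph on V with edge set F_1 ∪ … ∪ F_k if and only if S is an l-separator of G. -/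
/-- `o` is a scan order of `H`: an injective labelling such that every vertex that is not the
`o`-minimal vertex of its connected component of `H` has a neighbor with a smaller label. -/
def IsScanOrder {V : Type*} (H : SimpleGraph V) (o : V → ℕ) : Prop :=
  Function.Injective o ∧
    ∀ v w, H.Reachable v w → o w < o v → ∃ x, H.Adj v x ∧ o x < o v

/-- The earliest-neighbor (scan-first search) forest of `H` with respect to `o`: for every
vertex `v` that is not the `o`-minimal vertex of its connected component of `H`, the edge
joining `v` to its neighbor `u` with `o u` minimal among all neighbors of `v`. -/
def earliestForest {V : Type*} (H : SimpleGraph V) (o : V → ℕ) : Set (Sym2 V) :=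
  {e | ∃ v u, e = s(u, v) ∧ H.Adj v u ∧ (∃ w, H.Reachable v w ∧ o w < o v) ∧
    ∀ x, H.Adj v x → o u ≤ o x}

/-- `Gseq G F i` is the graph `G_i` on `V` with edge set `E(G) \ (F 0 ∪ ⋯ ∪ F (i-1))`. -/
def Gseq {V : Type*} (G : SimpleGraph V) (F : ℕ → Set (Sym2 V)) (i : ℕ) : SimpleGraph V :=
  SimpleGraph.fromEdgeSet (G.edgeSet \ ⋃ j ∈ Finset.range i, F j)

/-- `S` is an `l`-separator of `H`: `S` has exactly `l` vertices and deleting `S` and all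
incident edges yields a graph with strictly more connected components than `H`. -/
def IsLSeparator {V : Type*} [Fintype V] (H : SimpleGraph V) (l : ℕ) (S : Finset V) : Prop :=
  S.card = l ∧
    Nat.card H.ConnectedComponent <
      Nat.card (H.induce ((↑S : Set V)ᶜ)).ConnectedComponent


/-!
Rounds are indexed from `0`, as in `Gseq`: `G_j = Gseq G F j` and `F j` is its forest.

In round `j`, a vertex that is not the `o j`-minimum of its component of `G_j` has its earliest
neighbour as `F j`-parent, and following parents strictly lowers `o j` down to that minimum; so
`F j` spans the components of `G_j`, and the descent from a vertex avoids every vertex of larger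
label.

Let `|S| + j < k` and let `xy` be an edge of `G_j` outside `S`. Either `xy ∈ F j`, or `xy`
survives into `G_(j+1)`, where by induction `x` and `y` are joined by edges of
`F (j+1) ∪ ⋯ ∪ F (k-1)` avoiding `S \ {s}`, for `s` the vertex of `S` of least `o j`-label.
Each passage `a - s - b` through `s` uses edges of `G_(j+1)`, i.e. edges of `G_j` at `s` outside
`F j`; hence the `F j`-parents of `a` and `b` have labels below `o j s`, below all of `S`, and
both descend in `F j`, avoiding `S`, to the common minimum of their component. For `j = 0` and
`|S| = l < k`, every edge of `G - S` is thus bridged in `(F 0 ∪ ⋯ ∪ F (k-1)) - S`, so deleting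
`S` leaves the same components in both graphs.
-/

open Function

namespace SimpleGraph

variable {V : Type*}

/-- Unlike `H.induce Sᶜ`, a graph on all of `V`, so that its walks can be rerouted through
other graphs on `V`. -/
def avoiding (H : SimpleGraph V) (S : Set V) : SimpleGraph V where
  Adj x y := H.Adj x y ∧ x ∉ S ∧ y ∉ S
  symm := ⟨fun _ _ h => ⟨h.1.symm, h.2.2, h.2.1⟩⟩
  loopless := ⟨fun _ h => h.1.ne rfl⟩

variable {H H' G K L : SimpleGraph V} {S : Set V}

@[simp]
theorem avoiding_adj {x y : V} : (H.avoiding S).Adj x y ↔ H.Adj x y ∧ x ∉ S ∧ y ∉ S := Iff.rfl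

theorem avoiding_le : H.avoiding S ≤ H := fun _ _ h => (avoiding_adj.1 h).1

theorem avoiding_mono (h : H ≤ H') : H.avoiding S ≤ H'.avoiding S := fun _ _ hxy =>
  have ⟨hxy, hx, hy⟩ := avoiding_adj.1 hxy
  ⟨h hxy, hx, hy⟩

@[simp]
theorem avoiding_empty : H.avoiding ∅ = H := by
  ext
  simp [avoiding]

theorem Reachable.induce_compl_of_avoiding {x y : V} (h : (H.avoiding S).Reachable x y)
    (hx : x ∉ S) (hy : y ∉ S) : (H.induce Sᶜ).Reachable ⟨x, hx⟩ ⟨y, hy⟩ := by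
  obtain ⟨p⟩ := h
  induction p with
  | nil => rfl
  | cons h _ ih =>
    obtain ⟨h, -, hw⟩ := avoiding_adj.1 h
    exact (show (H.induce Sᶜ).Adj ⟨_, hx⟩ ⟨_, hw⟩ from h).reachable.trans (ih hw hy)

theorem reachable_of_reroute {s : V} (hK : ∀ ⦃a b⦄, K.Adj a b → b ∈ S → b = s)
    (hdirect : ∀ ⦃a b⦄, K.Adj a b → a ∉ S → b ∉ S → L.Reachable a b)
    (hdetour : ∀ ⦃a b⦄, K.Adj a s → K.Adj s b → a ∉ S → b ∉ S → L.Reachable a b) :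
    ∀ {x y : V}, K.Walk x y → x ∉ S → y ∉ S → L.Reachable x y
  | _, _, .nil, _, _ => .rfl
  | _, _, .cons hxw .nil, hx, hy => hdirect hxw hx hy
  | _, _, .cons (v := w) hxw (.cons (v := b) hwb p), hx, hy => by
    by_cases hw : w ∈ S
    · obtain rfl := hK hxw hw
      have hb : b ∉ S := fun hb => hwb.ne (hK hwb hb).symm
      exact (hdetour hxw hwb hx hb).trans (reachable_of_reroute hK hdirect hdetour p hb hy)
    · exact (hdirect hxw hx hw).trans
        (reachable_of_reroute hK hdirect hdetour (.cons hwb p) hw hy)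

theorem card_connectedComponent_eq_of_le (hle : H ≤ G)
    (hadj : ∀ ⦃x y⦄, G.Adj x y → H.Reachable x y) :
    Nat.card H.ConnectedComponent = Nat.card G.ConnectedComponent := by
  have hR : H.Reachable = G.Reachable := by
    refine le_antisymm (Reachable.mono' hle) ?_
    rw [reachable_eq_reflTransGen, reachable_eq_reflTransGen]
    exact Relation.reflTransGen_closed fun x y h => (reachable_iff_reflTransGen x y).1 (hadj h)
  exact Nat.card_congr (Equiv.cast (congrArg Quot hR))

end SimpleGraph

open SimpleGraph

section ScanOrder

variable {V : Type*} {H : SimpleGraph V} {o : V → ℕ}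

def IsComponentMin (H : SimpleGraph V) (o : V → ℕ) (v z : V) : Prop :=
  H.Reachable v z ∧ ∀ w, H.Reachable v w → o z ≤ o w

theorem IsComponentMin.of_reachable {v v' z : V} (h : H.Reachable v v')
    (hz : IsComponentMin H o v' z) : IsComponentMin H o v z :=
  ⟨h.trans hz.1, fun w hw => hz.2 w (h.symm.trans hw)⟩

theorem IsComponentMin.eq {v v' z z' : V} (ho : Injective o) (hz : IsComponentMin H o v z)
    (hz' : IsComponentMin H o v' z') (h : H.Reachable v v') : z = z' :=
  ho <| le_antisymm (hz.2 _ (h.trans hz'.1)) (hz'.2 _ (h.symm.trans hz.1))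

theorem earliestForest_subset_edgeSet : earliestForest H o ⊆ H.edgeSet := by
  rintro _ ⟨v, u, rfl, hvu, -, -⟩
  exact hvu.symm

theorem IsScanOrder.exists_parent (ho : IsScanOrder H o) {v : V} (hv : ¬IsComponentMin H o v v) :
    ∃ u, s(v, u) ∈ earliestForest H o ∧ H.Adj v u ∧ (∀ x, H.Adj v x → o u ≤ o x) ∧ o u < o v := by
  obtain ⟨w, hvw, hwv⟩ : ∃ w, H.Reachable v w ∧ o w < o v := by
    by_contra! h
    exact hv ⟨.rfl, h⟩
  obtain ⟨x, hvx, hxv⟩ := ho.2 v w hvw hwv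
  let u := argminOn o {x | H.Adj v x} ⟨x, hvx⟩
  have hvu : H.Adj v u := argminOn_mem o _ _
  have hmin : ∀ y, H.Adj v y → o u ≤ o y := fun y hy => argminOn_le o {x | H.Adj v x} hy
  exact ⟨u, ⟨v, u, Sym2.eq_swap, hvu, ⟨w, hvw, hwv⟩, hmin⟩, hvu, hmin, (hmin x hvx).trans_lt hxv⟩

/-- Earliest neighbours strictly decrease `o`, so the descent from `v` stays below `S`. -/
theorem IsScanOrder.descend (ho : IsScanOrder H o) {S : Set V} :
    ∀ v, (∀ t ∈ S, o v < o t) →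
      ∃ z, IsComponentMin H o v z ∧ ((fromEdgeSet (earliestForest H o)).avoiding S).Reachable v z
  | v, hv => by
    by_cases hmin : IsComponentMin H o v v
    · exact ⟨v, hmin, .rfl⟩
    obtain ⟨u, hvuF, hvu, -, huv⟩ := ho.exists_parent hmin
    have hu : ∀ t ∈ S, o u < o t := fun t ht => huv.trans (hv t ht)
    obtain ⟨z, hz, huz⟩ := ho.descend u hu
    have hstep : ((fromEdgeSet (earliestForest H o)).avoiding S).Adj v u :=
      ⟨(fromEdgeSet_adj _).2 ⟨hvuF, hvu.ne⟩, fun h => (hv v h).false, fun h => (hu u h).false⟩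
    exact ⟨z, hz.of_reachable hvu.reachable, hstep.reachable.trans huz⟩
termination_by v => o v

/-- The earliest neighbour of `a` comes before `s` and is not `s`, so it lies below all of `S`. -/
theorem IsScanOrder.descend_of_adj (ho : IsScanOrder H o) {S : Set V} {a s : V}
    (hs : ∀ t ∈ S, o s ≤ o t) (ha : a ∉ S) (has : H.Adj a s)
    (hasF : s(a, s) ∉ earliestForest H o) :
    ∃ z, IsComponentMin H o a z ∧
      ((fromEdgeSet (earliestForest H o)).avoiding S).Reachable a z := by
  by_cases hmin : IsComponentMin H o a a
  · exact ⟨a, hmin, .rfl⟩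
  obtain ⟨u, hauF, hau, humin, -⟩ := ho.exists_parent hmin
  have hus : o u < o s := (humin s has).lt_of_ne fun h => hasF (ho.1 h ▸ hauF)
  have hu : ∀ t ∈ S, o u < o t := fun t ht => hus.trans_le (hs t ht)
  obtain ⟨z, hz, huz⟩ := ho.descend u hu
  have hstep : ((fromEdgeSet (earliestForest H o)).avoiding S).Adj a u :=
    ⟨(fromEdgeSet_adj _).2 ⟨hauF, hau.ne⟩, ha, fun h => (hu u h).false⟩
  exact ⟨z, hz.of_reachable hau.reachable, hstep.reachable.trans huz⟩

theorem IsScanOrder.reachable_earliestForest (ho : IsScanOrder H o) {a b : V}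
    (h : H.Reachable a b) : (fromEdgeSet (earliestForest H o)).Reachable a b := by
  obtain ⟨za, hza, ha⟩ := ho.descend (S := ∅) a (by simp)
  obtain ⟨zb, hzb, hb⟩ := ho.descend (S := ∅) b (by simp)
  obtain rfl := hza.eq ho.1 hzb h
  simpa using ha.trans hb.symm

theorem IsScanOrder.reachable_avoiding_of_adj_of_adj (ho : IsScanOrder H o) {S : Set V}
    {a b s : V} (hs : ∀ t ∈ S, o s ≤ o t) (ha : a ∉ S) (hb : b ∉ S) (has : H.Adj a s)
    (hbs : H.Adj b s) (hasF : s(a, s) ∉ earliestForest H o)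
    (hbsF : s(b, s) ∉ earliestForest H o) :
    ((fromEdgeSet (earliestForest H o)).avoiding S).Reachable a b := by
  obtain ⟨za, hza, haz⟩ := ho.descend_of_adj hs ha has hasF
  obtain ⟨zb, hzb, hbz⟩ := ho.descend_of_adj hs hb hbs hbsF
  obtain rfl := hza.eq ho.1 hzb (has.reachable.trans hbs.reachable.symm)
  exact haz.trans hbz.symm

end ScanOrder

section ForestSequence

variable {V : Type*} {G : SimpleGraph V} {F : ℕ → Set (Sym2 V)} {o : ℕ → V → ℕ} {j k : ℕ}

def forestUnion (F : ℕ → Set (Sym2 V)) (j k : ℕ) : SimpleGraph V :=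
  fromEdgeSet (⋃ i ∈ Finset.Ico j k, F i)

theorem Gseq_zero : Gseq G F 0 = G := by
  simp [Gseq]

theorem Gseq_antitone : Antitone (Gseq G F) := by
  intro i i' hii' x y
  simp only [Gseq, fromEdgeSet_adj, Set.mem_sdiff, Set.mem_iUnion, Finset.mem_range]
  exact fun ⟨⟨hxy, hF⟩, hne⟩ => ⟨⟨hxy, fun ⟨m, hm, hmF⟩ => hF ⟨m, hm.trans_le hii', hmF⟩⟩, hne⟩

theorem Gseq_succ_adj {x y : V} :
    (Gseq G F (j + 1)).Adj x y ↔ (Gseq G F j).Adj x y ∧ s(x, y) ∉ F j := by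
  simp only [Gseq, fromEdgeSet_adj, Finset.range_add_one, Finset.set_biUnion_insert,
    Set.mem_sdiff, Set.mem_union]
  tauto

theorem forestUnion_mono_left {j' : ℕ} (h : j ≤ j') : forestUnion F j' k ≤ forestUnion F j k :=
  fromEdgeSet_mono <| Set.biUnion_subset_biUnion_left <|
    Finset.coe_subset.2 (Finset.Ico_subset_Ico_left h)

theorem fromEdgeSet_le_forestUnion (hj : j < k) : fromEdgeSet (F j) ≤ forestUnion F j k :=
  fromEdgeSet_mono <| Set.subset_biUnion_of_mem (u := F) (by simpa using hj)

theorem forestUnion_le_Gseq (hF : ∀ i < k, F i = earliestForest (Gseq G F i) (o i)) :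
    forestUnion F j k ≤ Gseq G F j := by
  intro x y hxy
  obtain ⟨hxyF, -⟩ := (fromEdgeSet_adj _).1 hxy
  obtain ⟨i, hi, hxyi⟩ := Set.mem_iUnion₂.1 hxyF
  rw [Finset.mem_Ico] at hi
  rw [hF i hi.2] at hxyi
  exact Gseq_antitone hi.1 (earliestForest_subset_edgeSet hxyi)

/-- Induction on `k - j`: the vertex `s ∈ S` of least `o j`-label is bypassed inside `F j`, and
`S \ {s}` is handled by the later rounds. The binder `{j}` shadows the section variable so that
the recursive call can change it. -/
theorem reachable_forestUnion_avoiding {j : ℕ} (hscan : ∀ i < k, IsScanOrder (Gseq G F i) (o i))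
    (hF : ∀ i < k, F i = earliestForest (Gseq G F i) (o i)) {S : Finset V} (hS : S.card + j < k)
    {x y : V} (hx : x ∉ S) (hy : y ∉ S) (hxy : (Gseq G F j).Adj x y) :
    ((forestUnion F j k).avoiding S).Reachable x y := by
  classical
  have hj : j < k := by omega
  have hforest : ((fromEdgeSet (earliestForest (Gseq G F j) (o j))).avoiding S) ≤
      (forestUnion F j k).avoiding S :=
    avoiding_mono (hF j hj ▸ fromEdgeSet_le_forestUnion hj)
  by_cases hxyF : s(x, y) ∈ F j
  · exact Adj.reachable (avoiding_mono (fromEdgeSet_le_forestUnion hj)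
      ⟨(fromEdgeSet_adj _).2 ⟨hxyF, hxy.ne⟩, hx, hy⟩)
  rcases S.eq_empty_or_nonempty with rfl | hSne
  · have h := (hscan j hj).reachable_earliestForest hxy.reachable
    rw [← hF j hj] at h
    rw [Finset.coe_empty, avoiding_empty]
    exact h.mono (fromEdgeSet_le_forestUnion hj)
  obtain ⟨s, hsS, hs⟩ := S.exists_min_image (o j) hSne
  have hS' : (S.erase s).card + (j + 1) < k := by
    rw [Finset.card_erase_of_mem hsS]
    have := Finset.card_pos.2 hSne
    omega
  obtain ⟨p⟩ := reachable_forestUnion_avoiding (j := j + 1) hscan hF hS'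
    (mt Finset.mem_of_mem_erase hx) (mt Finset.mem_of_mem_erase hy) (Gseq_succ_adj.2 ⟨hxy, hxyF⟩)
  refine reachable_of_reroute (s := s) ?_ ?_ ?_ p hx hy
  · intro a b hab hb
    by_contra hbs
    exact (avoiding_adj.1 hab).2.2 (Finset.mem_erase.2 ⟨hbs, hb⟩)
  · intro a b hab ha hb
    exact Adj.reachable ⟨forestUnion_mono_left j.le_succ (avoiding_adj.1 hab).1, ha, hb⟩
  · intro a b has hsb ha hb
    obtain ⟨has, hasF⟩ := Gseq_succ_adj.1 (forestUnion_le_Gseq hF (avoiding_adj.1 has).1)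
    obtain ⟨hbs, hbsF⟩ := Gseq_succ_adj.1 (forestUnion_le_Gseq hF (avoiding_adj.1 hsb).1.symm)
    rw [hF j hj] at hasF hbsF
    exact ((hscan j hj).reachable_avoiding_of_adj_of_adj hs ha hb has hbs hasF hbsF).mono hforest
termination_by k - j

end ForestSequence

theorem scanForests_separators_iff_general {V : Type*} [Fintype V] (G : SimpleGraph V)
    (k : ℕ)
    (o : ℕ → V → ℕ) (F : ℕ → Set (Sym2 V))
    (hscan : ∀ i < k, IsScanOrder (Gseq G F i) (o i))
    (hF : ∀ i < k, F i = earliestForest (Gseq G F i) (o i)) :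
    ∀ l : ℕ, 0 < l → l < k → ∀ S : Finset V,
      IsLSeparator (SimpleGraph.fromEdgeSet (⋃ i ∈ Finset.range k, F i)) l S ↔
        IsLSeparator G l S := by
  intro l _ hlk S
  have hU : fromEdgeSet (⋃ i ∈ Finset.range k, F i) = forestUnion F 0 k := by
    rw [forestUnion, Finset.range_eq_Ico]
  have hle : forestUnion F 0 k ≤ G := Gseq_zero (G := G) (F := F) ▸ forestUnion_le_Gseq hF
  have hreach {T : Finset V} (hT : T.card < k) {x y : V} (hx : x ∉ T) (hy : y ∉ T)
      (hxy : G.Adj x y) : ((forestUnion F 0 k).avoiding T).Reachable x y :=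
    reachable_forestUnion_avoiding hscan hF hT hx hy (Gseq_zero ▸ hxy)
  have hcomponents : Nat.card (forestUnion F 0 k).ConnectedComponent =
      Nat.card G.ConnectedComponent :=
    card_connectedComponent_eq_of_le hle fun x y hxy =>
      (hreach (T := ∅) (by simp; omega) (by simp) (by simp) hxy).mono avoiding_le
  have hcomponents_compl : S.card < k →
      Nat.card ((forestUnion F 0 k).induce (↑S : Set V)ᶜ).ConnectedComponent =
        Nat.card (G.induce (↑S : Set V)ᶜ).ConnectedComponent := fun hS =>
    card_connectedComponent_eq_of_le (fun _ _ h => hle h) fun x y hxy =>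
      (hreach hS x.2 y.2 (comap_adj.1 hxy)).induce_compl_of_avoiding x.2 y.2
  rw [hU]
  refine and_congr_right fun hS => ?_
  rw [hcomponents, hcomponents_compl (hS ▸ hlk)]

/-- With `G_0 = G` and, for `i = 1, …, k`, `o_i` a scan order of `G_(i-1)` and `F_i` the
earliest-neighbor forest of `G_(i-1)` with respect to `o_i`, for every positive `l < k` a
set `S` is an `l`-separator of the graph with edge set `F_1 ∪ ⋯ ∪ F_k` iff it is an
`l`-separator of `G`. -/
theorem scanForests_separators_iff {V : Type*} [Fintype V] (G : SimpleGraph V)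
    (k : ℕ) (hk : 0 < k)
    (o : ℕ → V → ℕ) (F : ℕ → Set (Sym2 V))
    (hscan : ∀ i < k, IsScanOrder (Gseq G F i) (o i))
    (hF : ∀ i < k, F i = earliestForest (Gseq G F i) (o i)) :
    ∀ l : ℕ, 0 < l → l < k → ∀ S : Finset V,
      IsLSeparator (SimpleGraph.fromEdgeSet (⋃ i ∈ Finset.range k, F i)) l S ↔
        IsLSeparator G l S :=
  scanForests_separators_iff_general G k o F hscan hF
end
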